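/- For X, Y ∈ gl_res the operators X₊₋Y₋₊ and Y₊₋X₋₊ are trace class, so the Schwinger term s(X,Y) := Tr(X₊₋Y₋₊ − Y₊₋X₋₊) is well defined; moreover s is bilinear and antisymmetric, the commutator [X,Y] again lies in gl_res, and s satisfies the 2-cocycle identity s([X,Y],Z) + s([Y,Z],X) + s([Z,X],Y) = 0 for all X, Y, Z ∈ gl_res. -/

import Mathlib

noncomputable section

variable {H : Type*} [NormedAddCommGroup H] [InnerProductSpace ℂ H] [CompleteSpace H]

/-- Hilbert–Schmidt operator (with respect to the Hilbert basis `b`). -/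
def IsHS {ι : Type*} (b : HilbertBasis ι ℂ H) (T : H →L[ℂ] H) : Prop :=
  Summable fun i => ‖T (b i)‖ ^ 2

/-- Trace-class operator: a product of two Hilbert–Schmidt operators. -/
def IsTC {ι : Type*} (b : HilbertBasis ι ℂ H) (T : H →L[ℂ] H) : Prop :=
  ∃ A B : H →L[ℂ] H, IsHS b A ∧ IsHS b B ∧ T = A * B

/-- The trace with respect to the Hilbert basis `b`. -/
def trB {ι : Type*} (b : HilbertBasis ι ℂ H) (T : H →L[ℂ] H) : ℂ :=
  ∑' i, (inner ℂ (b i) (T (b i)) : ℂ)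

/-- Membership in the restricted algebra `gl_res`: the commutator `[T, P]` is
Hilbert–Schmidt. -/
def InGlres {ι : Type*} (b : HilbertBasis ι ℂ H) (P T : H →L[ℂ] H) : Prop :=
  IsHS b (T * P - P * T)

/-- Membership in `L¹_res`: the diagonal blocks `T₊₊ = P T P`, `T₋₋ = (1-P) T (1-P)`
are trace class and the off-diagonal blocks `T₊₋ = P T (1-P)`, `T₋₊ = (1-P) T P`
are Hilbert–Schmidt. -/
def InL1res {ι : Type*} (b : HilbertBasis ι ℂ H) (P T : H →L[ℂ] H) : Prop :=
  IsTC b (P * T * P) ∧ IsTC b ((1 - P) * T * (1 - P)) ∧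
    IsHS b (P * T * (1 - P)) ∧ IsHS b ((1 - P) * T * P)

/-- The restricted trace `Tr_res T = Tr T₊₊ + Tr T₋₋`. -/
def trRes {ι : Type*} (b : HilbertBasis ι ℂ H) (P T : H →L[ℂ] H) : ℂ :=
  trB b (P * T * P) + trB b ((1 - P) * T * (1 - P))

/-- The Schwinger term `s(X,Y) = Tr(X₊₋Y₋₊ - Y₊₋X₋₊)`. -/
def schwinger {ι : Type*} (b : HilbertBasis ι ℂ H) (P X Y : H →L[ℂ] H) : ℂ :=
  trB b ((P * X * (1 - P)) * ((1 - P) * Y * P) - (P * Y * (1 - P)) * ((1 - P) * X * P))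

/-!
The off-diagonal blocks `X₊₋ = P X (1-P)` and `X₋₊ = (1-P) X P` of `X ∈ gl_res` are compressions
of the Hilbert–Schmidt commutator `[X, P]`, so the products in the Schwinger term are trace class
and the trace is additive on them. `gl_res` is closed under products, and inserting
`1 = P + (1-P)` between `X` and `Y` gives, after one use of the cyclicity of the trace on
products of Hilbert–Schmidt operators,
`s(XY, Z) = Tr(X₊₊Y₊₋Z₋₊) + Tr(X₊₋Y₋₋Z₋₊) - Tr(Y₊₊Z₊₋X₋₊) - Tr(Z₊₋X₋₋Y₋₊)`.
The terms cancel in the cyclic sum, so `s(XY, Z) + s(YZ, X) + s(ZX, Y) = 0`; subtracting this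
identity for `(Y, X, Z)` gives the cocycle identity, as `s` is additive in its first argument.
-/

open scoped InnerProduct

theorem HilbertBasis.hasSum_norm_inner_sq {𝕜 E ι : Type*} [RCLike 𝕜] [NormedAddCommGroup E]
    [InnerProductSpace 𝕜 E] (b : HilbertBasis ι 𝕜 E) (v : E) :
    HasSum (fun i => ‖(inner 𝕜 (b i) v : 𝕜)‖ ^ 2) (‖v‖ ^ 2) := by
  simpa [HilbertBasis.repr_apply_apply] using
    lp.hasSum_norm (E := fun _ : ι => 𝕜) (p := 2) (by norm_num) (b.repr v)

section HilbertSchmidt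

variable {ι : Type*} {b : HilbertBasis ι ℂ H}

omit [CompleteSpace H] in
theorem isHS_iff_summable_norm_inner_sq (b : HilbertBasis ι ℂ H) (T : H →L[ℂ] H) :
    IsHS b T ↔ Summable fun p : ι × ι => ‖(inner ℂ (b p.2) (T (b p.1)) : ℂ)‖ ^ 2 := by
  have hrow i := b.hasSum_norm_inner_sq (T (b i))
  rw [summable_prod_of_nonneg fun _ => by positivity]
  exact ⟨fun h => ⟨fun i => (hrow i).summable, h.congr fun i => (hrow i).tsum_eq.symm⟩,
    fun h => h.2.congr fun i => (hrow i).tsum_eq⟩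

theorem IsHS.adjoint {T : H →L[ℂ] H} (hT : IsHS b T) : IsHS b (T†) := by
  rw [isHS_iff_summable_norm_inner_sq] at hT ⊢
  refine ((Equiv.prodComm ι ι).summable_iff.2 hT).congr fun p => ?_
  simp only [Function.comp, Equiv.prodComm_apply, Prod.fst_swap, Prod.snd_swap]
  rw [ContinuousLinearMap.adjoint_inner_right, ← norm_inner_symm]

omit [CompleteSpace H] in
theorem IsHS.mul_left {T : H →L[ℂ] H} (A : H →L[ℂ] H) (hT : IsHS b T) : IsHS b (A * T) := by
  refine .of_nonneg_of_le (fun _ => by positivity) (fun i => ?_)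
    (Summable.mul_left (‖A‖ ^ 2) hT)
  rw [← mul_pow]
  exact pow_le_pow_left₀ (norm_nonneg _) (A.le_opNorm _) 2

theorem IsHS.mul_right {T : H →L[ℂ] H} (A : H →L[ℂ] H) (hT : IsHS b T) : IsHS b (T * A) := by
  simpa [ContinuousLinearMap.mul_def, ContinuousLinearMap.adjoint_comp] using
    (hT.adjoint.mul_left (A†)).adjoint

omit [CompleteSpace H] in
theorem IsHS.add {S T : H →L[ℂ] H} (hS : IsHS b S) (hT : IsHS b T) : IsHS b (S + T) := by
  refine .of_nonneg_of_le (fun _ => by positivity) (fun i => ?_)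
    (Summable.mul_left 2 (Summable.add hS hT))
  have h := norm_add_le (S (b i)) (T (b i))
  rw [add_apply]
  nlinarith [norm_nonneg (S (b i) + T (b i)), sq_nonneg (‖S (b i)‖ - ‖T (b i)‖)]

omit [CompleteSpace H] in
theorem IsHS.neg {T : H →L[ℂ] H} (hT : IsHS b T) : IsHS b (-T) := by
  simpa [IsHS] using hT

omit [CompleteSpace H] in
theorem IsHS.sub {S T : H →L[ℂ] H} (hS : IsHS b S) (hT : IsHS b T) : IsHS b (S - T) := by
  simpa [sub_eq_add_neg] using hS.add hT.neg

end HilbertSchmidt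

theorem mul_le_sq_add_sq (x y : ℝ) : x * y ≤ x ^ 2 + y ^ 2 := by
  nlinarith [sq_nonneg (x - y), sq_nonneg x, sq_nonneg y]

section Trace

variable {ι : Type*} {b : HilbertBasis ι ℂ H}

def SummableDiag (b : HilbertBasis ι ℂ H) (T : H →L[ℂ] H) : Prop :=
  Summable fun i => (inner ℂ (b i) (T (b i)) : ℂ)

theorem IsHS.summableDiag_mul {A B : H →L[ℂ] H} (hA : IsHS b A) (hB : IsHS b B) :
    SummableDiag b (A * B) := by
  refine .of_norm <| .of_nonneg_of_le (fun _ => norm_nonneg _) (fun i => ?_)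
    (Summable.add hA.adjoint hB)
  rw [mul_apply_eq_comp, ← ContinuousLinearMap.adjoint_inner_left]
  exact (norm_inner_le_norm _ _).trans (mul_le_sq_add_sq _ _)

omit [CompleteSpace H] in
theorem SummableDiag.add {A B : H →L[ℂ] H} (hA : SummableDiag b A) (hB : SummableDiag b B) :
    SummableDiag b (A + B) := by
  simpa [SummableDiag, inner_add_right] using Summable.add hA hB

omit [CompleteSpace H] in
theorem SummableDiag.sub {A B : H →L[ℂ] H} (hA : SummableDiag b A) (hB : SummableDiag b B) :
    SummableDiag b (A - B) := by
  simpa [SummableDiag, inner_sub_right] using Summable.sub hA hB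

omit [CompleteSpace H] in
theorem trB_add {A B : H →L[ℂ] H} (hA : SummableDiag b A) (hB : SummableDiag b B) :
    trB b (A + B) = trB b A + trB b B := by
  simp only [trB, add_apply, inner_add_right, hA.tsum_add hB]

omit [CompleteSpace H] in
theorem trB_sub {A B : H →L[ℂ] H} (hA : SummableDiag b A) (hB : SummableDiag b B) :
    trB b (A - B) = trB b A - trB b B := by
  simp only [trB, sub_apply, inner_sub_right, hA.tsum_sub hB]

omit [CompleteSpace H] in
theorem trB_neg (A : H →L[ℂ] H) : trB b (-A) = -trB b A := by
  simp only [trB, neg_apply, inner_neg_right, tsum_neg]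

omit [CompleteSpace H] in
theorem trB_smul (c : ℂ) (A : H →L[ℂ] H) : trB b (c • A) = c * trB b A := by
  simp only [trB, smul_apply, inner_smul_right, tsum_mul_left]

omit [CompleteSpace H] in
theorem summable_inner_mul_inner_of_isHS {A B : H →L[ℂ] H} (hA : IsHS b A) (hB : IsHS b B) :
    Summable fun p : ι × ι =>
      (inner ℂ (b p.1) (A (b p.2)) : ℂ) * inner ℂ (b p.2) (B (b p.1)) := by
  have hA2 := (Equiv.prodComm ι ι).summable_iff.2 ((isHS_iff_summable_norm_inner_sq b A).1 hA)
  refine .of_norm <| .of_nonneg_of_le (fun _ => norm_nonneg _) (fun p => ?_)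
    (hA2.add ((isHS_iff_summable_norm_inner_sq b B).1 hB))
  exact (norm_mul_le _ _).trans (mul_le_sq_add_sq _ _)

theorem trB_mul_eq_tsum {A B : H →L[ℂ] H} (hA : IsHS b A) (hB : IsHS b B) :
    trB b (A * B) =
      ∑' p : ι × ι, (inner ℂ (b p.1) (A (b p.2)) : ℂ) * inner ℂ (b p.2) (B (b p.1)) := by
  have hf := summable_inner_mul_inner_of_isHS hA hB
  rw [hf.tsum_prod' fun i => hf.prod_factor i, trB]
  refine tsum_congr fun i => ?_
  rw [mul_apply_eq_comp, ← ContinuousLinearMap.adjoint_inner_left,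
    ← b.tsum_inner_mul_inner]
  simp only [ContinuousLinearMap.adjoint_inner_left]

theorem trB_mul_comm {A B : H →L[ℂ] H} (hA : IsHS b A) (hB : IsHS b B) :
    trB b (A * B) = trB b (B * A) := by
  rw [trB_mul_eq_tsum hA hB, trB_mul_eq_tsum hB hA,
    ← (Equiv.prodComm ι ι).tsum_eq]
  exact tsum_congr fun p => mul_comm _ _

theorem trB_mul_mul_rotate {A B : H →L[ℂ] H} (hA : IsHS b A) (hB : IsHS b B) (C : H →L[ℂ] H) :
    trB b (A * (B * C)) = trB b (C * (A * B)) := by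
  rw [trB_mul_comm hA (hB.mul_right C), mul_assoc, trB_mul_comm hB (hA.mul_left C), mul_assoc]

end Trace

section Schwinger

variable {ι : Type*} {b : HilbertBasis ι ℂ H} {P : H →L[ℂ] H}

theorem InGlres.mul {X Y : H →L[ℂ] H} (hX : InGlres b P X) (hY : InGlres b P Y) :
    InGlres b P (X * Y) := by
  have e : X * Y * P - P * (X * Y) = X * (Y * P - P * Y) + (X * P - P * X) * Y := by
    noncomm_ring
  rw [InGlres, e]
  exact (hY.mul_left X).add (hX.mul_right Y)

omit [CompleteSpace H] in
theorem InGlres.sub {X Y : H →L[ℂ] H} (hX : InGlres b P X) (hY : InGlres b P Y) :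
    InGlres b P (X - Y) := by
  rw [InGlres, sub_mul, mul_sub, sub_sub_sub_comm]
  exact IsHS.sub hX hY

theorem InGlres.isHS_plusMinus (hP : IsIdempotentElem P) {X : H →L[ℂ] H} (hX : InGlres b P X) :
    IsHS b (P * X * (1 - P)) := by
  have e : P * X * (1 - P) = -(P * (X * P - P * X) * (1 - P)) := by
    simp only [mul_sub, sub_mul, mul_one, mul_assoc, hP.eq, ← mul_assoc P P]
    abel
  rw [e]
  exact ((hX.mul_left P).mul_right _).neg

theorem InGlres.isHS_minusPlus (hP : IsIdempotentElem P) {X : H →L[ℂ] H} (hX : InGlres b P X) :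
    IsHS b ((1 - P) * X * P) := by
  have e : (1 - P) * X * P = (1 - P) * (X * P - P * X) * P := by
    simp only [mul_sub, sub_mul, one_mul, mul_assoc, hP.eq, ← mul_assoc P P]
    abel
  rw [e]
  exact (hX.mul_left _).mul_right P

omit [CompleteSpace H] in
theorem schwinger_swap (X Y : H →L[ℂ] H) : schwinger b P Y X = -schwinger b P X Y := by
  rw [schwinger, schwinger, ← trB_neg, neg_sub]

omit [CompleteSpace H] in
theorem schwinger_smul_left (c : ℂ) (X Y : H →L[ℂ] H) :
    schwinger b P (c • X) Y = c * schwinger b P X Y := by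
  rw [schwinger, schwinger, ← trB_smul]
  simp only [mul_smul_comm, smul_mul_assoc, smul_sub]

theorem schwinger_add_left (hP : IsIdempotentElem P) {X X' Y : H →L[ℂ] H}
    (hX : InGlres b P X) (hX' : InGlres b P X') (hY : InGlres b P Y) :
    schwinger b P (X + X') Y = schwinger b P X Y + schwinger b P X' Y := by
  have hXY := (hX.isHS_plusMinus hP).summableDiag_mul (hY.isHS_minusPlus hP)
  have hYX := (hY.isHS_plusMinus hP).summableDiag_mul (hX.isHS_minusPlus hP)
  have hX'Y := (hX'.isHS_plusMinus hP).summableDiag_mul (hY.isHS_minusPlus hP)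
  have hYX' := (hY.isHS_plusMinus hP).summableDiag_mul (hX'.isHS_minusPlus hP)
  rw [schwinger, schwinger, schwinger, ← trB_add (hXY.sub hYX) (hX'Y.sub hYX')]
  congr 1
  noncomm_ring

theorem schwinger_sub_left (hP : IsIdempotentElem P) {X X' Y : H →L[ℂ] H}
    (hX : InGlres b P X) (hX' : InGlres b P X') (hY : InGlres b P Y) :
    schwinger b P (X - X') Y = schwinger b P X Y - schwinger b P X' Y := by
  rw [eq_sub_iff_add_eq, ← schwinger_add_left hP (hX.sub hX') hX' hY, sub_add_cancel]

theorem schwinger_add_right (hP : IsIdempotentElem P) {X Y Y' : H →L[ℂ] H}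
    (hX : InGlres b P X) (hY : InGlres b P Y) (hY' : InGlres b P Y') :
    schwinger b P X (Y + Y') = schwinger b P X Y + schwinger b P X Y' := by
  rw [schwinger_swap, schwinger_add_left hP hY hY' hX, schwinger_swap Y, schwinger_swap Y',
    neg_add]

omit [CompleteSpace H] in
theorem schwinger_smul_right (c : ℂ) (X Y : H →L[ℂ] H) :
    schwinger b P X (c • Y) = c * schwinger b P X Y := by
  rw [schwinger_swap, schwinger_smul_left, schwinger_swap Y, mul_neg]

/-- `Tr(X₊₊ Y₊₋ Z₋₊)` -/
def trBlocksPlus (b : HilbertBasis ι ℂ H) (P X Y Z : H →L[ℂ] H) : ℂ :=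
  trB b ((P * X * P) * ((P * Y * (1 - P)) * ((1 - P) * Z * P)))

/-- `Tr(X₊₋ Y₋₋ Z₋₊)` -/
def trBlocksMinus (b : HilbertBasis ι ℂ H) (P X Y Z : H →L[ℂ] H) : ℂ :=
  trB b ((P * X * (1 - P)) * (((1 - P) * Y * (1 - P)) * ((1 - P) * Z * P)))

theorem schwinger_mul_left (hP : IsIdempotentElem P) {X Y Z : H →L[ℂ] H}
    (hX : InGlres b P X) (hY : InGlres b P Y) (hZ : InGlres b P Z) :
    schwinger b P (X * Y) Z = trBlocksPlus b P X Y Z + trBlocksMinus b P X Y Z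
      - trBlocksPlus b P Y Z X - trBlocksMinus b P Z X Y := by
  have hXpm := hX.isHS_plusMinus hP
  have hYpm := hY.isHS_plusMinus hP
  have hZpm := hZ.isHS_plusMinus hP
  have hXmp := hX.isHS_minusPlus hP
  have hYmp := hY.isHS_minusPlus hP
  have hZmp := hZ.isHS_minusPlus hP
  have e : (P * (X * Y) * (1 - P)) * ((1 - P) * Z * P)
        - (P * Z * (1 - P)) * ((1 - P) * (X * Y) * P)
      = ((P * X * P) * ((P * Y * (1 - P)) * ((1 - P) * Z * P))
          + (P * X * (1 - P)) * (((1 - P) * Y * (1 - P)) * ((1 - P) * Z * P)))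
        - ((P * Z * (1 - P)) * (((1 - P) * X * P) * (P * Y * P))
          + (P * Z * (1 - P)) * (((1 - P) * X * (1 - P)) * ((1 - P) * Y * P))) := by
    simp only [mul_sub, sub_mul, mul_one, one_mul, mul_assoc, hP.eq, ← mul_assoc P P]
    abel
  have h₁ := (hYpm.mul_left (P * X * P)).summableDiag_mul hZmp
  rw [mul_assoc (P * X * P)] at h₁
  have h₂ := hXpm.summableDiag_mul (hZmp.mul_left ((1 - P) * Y * (1 - P)))
  have h₃ := hZpm.summableDiag_mul (hXmp.mul_right (P * Y * P))
  have h₄ := hZpm.summableDiag_mul (hYmp.mul_left ((1 - P) * X * (1 - P)))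
  rw [schwinger, e, trB_sub (h₁.add h₂) (h₃.add h₄), trB_add h₁ h₂, trB_add h₃ h₄,
    trB_mul_mul_rotate hZpm hXmp, sub_add_eq_sub_sub]
  rfl

theorem schwinger_mul_cyclic (hP : IsIdempotentElem P) {X Y Z : H →L[ℂ] H}
    (hX : InGlres b P X) (hY : InGlres b P Y) (hZ : InGlres b P Z) :
    schwinger b P (X * Y) Z + schwinger b P (Y * Z) X + schwinger b P (Z * X) Y = 0 := by
  rw [schwinger_mul_left hP hX hY hZ, schwinger_mul_left hP hY hZ hX,
    schwinger_mul_left hP hZ hX hY]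
  ring

theorem schwinger_commutator_cocycle (hP : IsIdempotentElem P) {X Y Z : H →L[ℂ] H}
    (hX : InGlres b P X) (hY : InGlres b P Y) (hZ : InGlres b P Z) :
    schwinger b P (X * Y - Y * X) Z + schwinger b P (Y * Z - Z * Y) X +
      schwinger b P (Z * X - X * Z) Y = 0 := by
  rw [schwinger_sub_left hP (hX.mul hY) (hY.mul hX) hZ,
    schwinger_sub_left hP (hY.mul hZ) (hZ.mul hY) hX,
    schwinger_sub_left hP (hZ.mul hX) (hX.mul hZ) hY]
  linear_combination schwinger_mul_cyclic hP hX hY hZ - schwinger_mul_cyclic hP hY hX hZ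

end Schwinger

theorem stmt7_general
    (P : H →L[ℂ] H) (hPidem : IsIdempotentElem P)
    {ι : Type*} (b : HilbertBasis ι ℂ H) :
    (∀ X Y : H →L[ℂ] H, InGlres b P X → InGlres b P Y →
      IsTC b ((P * X * (1 - P)) * ((1 - P) * Y * P)) ∧
      IsTC b ((P * Y * (1 - P)) * ((1 - P) * X * P))) ∧
    (∀ X X' Y : H →L[ℂ] H, InGlres b P X → InGlres b P X' → InGlres b P Y →
      schwinger b P (X + X') Y = schwinger b P X Y + schwinger b P X' Y) ∧
    (∀ (c : ℂ) (X Y : H →L[ℂ] H), InGlres b P X → InGlres b P Y →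
      schwinger b P (c • X) Y = c * schwinger b P X Y) ∧
    (∀ X Y Y' : H →L[ℂ] H, InGlres b P X → InGlres b P Y → InGlres b P Y' →
      schwinger b P X (Y + Y') = schwinger b P X Y + schwinger b P X Y') ∧
    (∀ (c : ℂ) (X Y : H →L[ℂ] H), InGlres b P X → InGlres b P Y →
      schwinger b P X (c • Y) = c * schwinger b P X Y) ∧
    (∀ X Y : H →L[ℂ] H, InGlres b P X → InGlres b P Y →
      schwinger b P Y X = -schwinger b P X Y) ∧
    (∀ X Y : H →L[ℂ] H, InGlres b P X → InGlres b P Y →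
      InGlres b P (X * Y - Y * X)) ∧
    (∀ X Y Z : H →L[ℂ] H, InGlres b P X → InGlres b P Y → InGlres b P Z →
      schwinger b P (X * Y - Y * X) Z + schwinger b P (Y * Z - Z * Y) X +
        schwinger b P (Z * X - X * Z) Y = 0) :=
  ⟨fun _ _ hX hY =>
      ⟨⟨_, _, hX.isHS_plusMinus hPidem, hY.isHS_minusPlus hPidem, rfl⟩,
        ⟨_, _, hY.isHS_plusMinus hPidem, hX.isHS_minusPlus hPidem, rfl⟩⟩,
    fun _ _ _ => schwinger_add_left hPidem,
    fun c X Y _ _ => schwinger_smul_left c X Y,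
    fun _ _ _ => schwinger_add_right hPidem,
    fun c X Y _ _ => schwinger_smul_right c X Y,
    fun X Y _ _ => schwinger_swap X Y,
    fun _ _ hX hY => (hX.mul hY).sub (hY.mul hX),
    fun _ _ _ => schwinger_commutator_cocycle hPidem⟩

/-- For `X, Y ∈ gl_res` the operators `X₊₋Y₋₊` and `Y₊₋X₋₊` are
trace class, the Schwinger term `s` is bilinear and antisymmetric, `[X,Y] ∈ gl_res`,
and `s` satisfies the 2-cocycle identity. -/
theorem stmt7 [TopologicalSpace.SeparableSpace H]
    (P : H →L[ℂ] H) (hPsa : IsSelfAdjoint P) (hPidem : IsIdempotentElem P)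
    {ι : Type*} (b : HilbertBasis ι ℂ H) :
    (∀ X Y : H →L[ℂ] H, InGlres b P X → InGlres b P Y →
      IsTC b ((P * X * (1 - P)) * ((1 - P) * Y * P)) ∧
      IsTC b ((P * Y * (1 - P)) * ((1 - P) * X * P))) ∧
    (∀ X X' Y : H →L[ℂ] H, InGlres b P X → InGlres b P X' → InGlres b P Y →
      schwinger b P (X + X') Y = schwinger b P X Y + schwinger b P X' Y) ∧
    (∀ (c : ℂ) (X Y : H →L[ℂ] H), InGlres b P X → InGlres b P Y →
      schwinger b P (c • X) Y = c * schwinger b P X Y) ∧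
    (∀ X Y Y' : H →L[ℂ] H, InGlres b P X → InGlres b P Y → InGlres b P Y' →
      schwinger b P X (Y + Y') = schwinger b P X Y + schwinger b P X Y') ∧
    (∀ (c : ℂ) (X Y : H →L[ℂ] H), InGlres b P X → InGlres b P Y →
      schwinger b P X (c • Y) = c * schwinger b P X Y) ∧
    (∀ X Y : H →L[ℂ] H, InGlres b P X → InGlres b P Y →
      schwinger b P Y X = -schwinger b P X Y) ∧
    (∀ X Y : H →L[ℂ] H, InGlres b P X → InGlres b P Y →
      InGlres b P (X * Y - Y * X)) ∧
    (∀ X Y Z : H →L[ℂ] H, InGlres b P X → InGlres b P Y → InGlres b P Z →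
      schwinger b P (X * Y - Y * X) Z + schwinger b P (Y * Z - Z * Y) X +
        schwinger b P (Z * X - X * Z) Y = 0) :=
  stmt7_general P hPidem b
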